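/- PFO and PTL have the same expressive power: a language L ⊆ Σ* is definable by a PFO sentence if and only if it is PTL-definable. -/

import Mathlib

/-- PTL formulas over alphabet `α`: atoms, conjunction, negation, and the past operator. -/
inductive PTL (α : Type*) : Type _
  | atom : α → PTL α
  | conj : PTL α → PTL α → PTL α
  | neg : PTL α → PTL α
  | past : PTL α → PTL α

/-- Satisfaction of a PTL formula in string `w` at (1-based) position `n ∈ {1,…,N+1}`. -/
def PTL.Sat {α : Type*} (w : List α) : PTL α → ℕ → Prop
  | .atom a, n => 1 ≤ n ∧ w[n - 1]? = some a
  | .conj ψ₁ ψ₂, n => PTL.Sat w ψ₁ n ∧ PTL.Sat w ψ₂ n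
  | .neg ψ, n => ¬ PTL.Sat w ψ n
  | .past ψ, n => ∃ m, 1 ≤ m ∧ m < n ∧ PTL.Sat w ψ m

/-- A string `w` of length `N` satisfies `ψ` iff `w, N+1 ⊨ ψ`. -/
def PTL.Models {α : Type*} (w : List α) (ψ : PTL α) : Prop :=
  PTL.Sat w ψ (w.length + 1)

/-- A language is PTL-definable if it is the set of strings satisfying some PTL formula. -/
def PTLDefinable {α : Type*} (L : Set (List α)) : Prop :=
  ∃ ψ : PTL α, ∀ w : List α, w ∈ L ↔ PTL.Models w ψ

/-- The two variables of PFO. -/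
inductive PVar : Type
  | x
  | y
deriving DecidableEq

/-- The other variable. -/
def PVar.other : PVar → PVar
  | .x => .y
  | .y => .x

/-- PFO formulas: atoms `π_a(v)`, Boolean connectives, bounded existential quantifiers
`∃ v < (other v) : φ` (binding `v`), and the unbounded quantifier `∃ v : φ`. -/
inductive PFO (α : Type*) : Type _
  | atom : α → PVar → PFO α
  | conj : PFO α → PFO α → PFO α
  | neg : PFO α → PFO α
  | existsLt : PVar → PFO α → PFO α
  | existsUnb : PVar → PFO α → PFO α

/-- Free variables of a PFO formula; in `∃ v < (other v) : φ` the bounding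
variable `other v` occurs free. -/
def PFO.freeVars {α : Type*} : PFO α → Finset PVar
  | .atom _ v => {v}
  | .conj φ₁ φ₂ => PFO.freeVars φ₁ ∪ PFO.freeVars φ₂
  | .neg φ => PFO.freeVars φ
  | .existsLt v φ => (PFO.freeVars φ).erase v ∪ {v.other}
  | .existsUnb v φ => (PFO.freeVars φ).erase v

/-- Satisfaction of a PFO formula in string `w` under an assignment `ρ` of the
variables to (1-based) positions. -/
def PFO.Sat {α : Type*} (w : List α) : PFO α → (PVar → ℕ) → Prop
  | .atom a v, ρ => 1 ≤ ρ v ∧ w[ρ v - 1]? = some a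
  | .conj φ₁ φ₂, ρ => PFO.Sat w φ₁ ρ ∧ PFO.Sat w φ₂ ρ
  | .neg φ, ρ => ¬ PFO.Sat w φ ρ
  | .existsLt v φ, ρ => ∃ m, 1 ≤ m ∧ m < ρ v.other ∧ PFO.Sat w φ (Function.update ρ v m)
  | .existsUnb v φ, ρ => ∃ m, 1 ≤ m ∧ m ≤ w.length ∧ PFO.Sat w φ (Function.update ρ v m)

/-- A language is PFO-definable if it is the set of strings satisfying some PFO sentence. -/
def PFODefinable {α : Type*} (L : Set (List α)) : Prop :=
  ∃ φ : PFO α, PFO.freeVars φ = ∅ ∧ ∀ w : List α, w ∈ L ↔ ∀ ρ : PVar → ℕ, PFO.Sat w φ ρ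

/-! A PTL formula evaluated at a position becomes a PFO formula in one free variable, with
`P ψ` at `x` read as `∃ y < x, ψ(y)`, and evaluation at the end of the string is expressed by the
unbounded quantifier.

Conversely, every PFO formula is equivalent to a finite disjunction of terms
`ψ(x) ∧ ψ'(y) ∧ χ`, where `ψ`, `ψ'` are PTL formulas evaluated at the positions of the two
variables and `χ` is a PTL formula evaluated at the end of the string. Such disjunctions are closed
under `∧` and `¬` by distributivity, and quantifying `y` only touches the middle factor:
`∃ y < x, ψ(x) ∧ ψ'(y) ∧ χ` is `(ψ ∧ P ψ')(x) ∧ χ`, and `∃ y, ψ(x) ∧ ψ'(y) ∧ χ` is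
`ψ(x) ∧ (P ψ' ∧ χ)` at the end. For a sentence both variables may be placed at the end of the
string, leaving a single PTL formula. -/

section

variable {α : Type*}

namespace PVar

@[simp] lemma other_other : ∀ v : PVar, v.other.other = v := by
  rintro (_ | _) <;> rfl

lemma other_ne : ∀ v : PVar, v.other ≠ v := by
  rintro (_ | _) <;> simp [PVar.other]

lemma eq_or_eq_other : ∀ u v : PVar, v = u ∨ v = u.other := by
  rintro (_ | _) (_ | _) <;> simp [PVar.other]

@[simp] lemma update_apply_other (ρ : PVar → ℕ) (v : PVar) (m : ℕ) :
    Function.update ρ v m v.other = ρ v.other :=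
  Function.update_of_ne (other_ne v) m ρ

end PVar

namespace PTL

/-- PTL has no constants, so truth is built from a letter. -/
def top (a : α) : PTL α := .neg (.conj (.atom a) (.neg (.atom a)))

@[simp] lemma sat_top (a : α) (w : List α) (n : ℕ) : PTL.Sat w (top a) n := by
  simp only [top, Sat]; tauto

def bigOr (a : α) : List (PTL α) → PTL α
  | [] => .neg (top a)
  | ψ :: l => .neg (.conj (.neg ψ) (.neg (bigOr a l)))

@[simp] lemma sat_bigOr (a : α) (w : List α) (n : ℕ) (l : List (PTL α)) :
    PTL.Sat w (bigOr a l) n ↔ ∃ ψ ∈ l, PTL.Sat w ψ n := by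
  induction l with
  | nil => simp [bigOr, Sat]
  | cons ψ l ih => simp only [bigOr, Sat, ih, List.exists_mem_cons_iff, not_and_or, not_not]

end PTL

/-- The term `ψ(v) ∧ ψ'(v') ∧ χ` of a separated normal form: `here` is read at the position of one
variable, `there` at the position of the other, and `atEnd` at the end of the string. -/
structure Separated (α : Type*) where
  here : PTL α
  there : PTL α
  atEnd : PTL α

namespace Separated

def Holds (s : Separated α) (w : List α) (n n' : ℕ) : Prop :=
  PTL.Sat w s.here n ∧ PTL.Sat w s.there n' ∧ PTL.Models w s.atEnd

def swap (s : Separated α) : Separated α := ⟨s.there, s.here, s.atEnd⟩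

def and (s t : Separated α) : Separated α :=
  ⟨s.here.conj t.here, s.there.conj t.there, s.atEnd.conj t.atEnd⟩

def pastThere (a : α) (s : Separated α) : Separated α :=
  ⟨s.here.conj s.there.past, PTL.top a, s.atEnd⟩

def onceThere (a : α) (s : Separated α) : Separated α :=
  ⟨s.here, PTL.top a, s.there.past.conj s.atEnd⟩

def negations (a : α) (s : Separated α) : List (Separated α) :=
  [⟨s.here.neg, PTL.top a, PTL.top a⟩, ⟨PTL.top a, s.there.neg, PTL.top a⟩,
    ⟨PTL.top a, PTL.top a, s.atEnd.neg⟩]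

def toPTL (s : Separated α) : PTL α := s.here.conj (s.there.conj s.atEnd)

variable (a : α) (s t : Separated α) (w : List α) (n n' : ℕ)

lemma holds_swap : s.swap.Holds w n n' ↔ s.Holds w n' n := by
  simp only [swap, Holds]; tauto

lemma holds_and : (s.and t).Holds w n n' ↔ s.Holds w n n' ∧ t.Holds w n n' := by
  simp only [and, Holds, PTL.Sat, PTL.Models]; tauto

lemma holds_pastThere : (s.pastThere a).Holds w n n' ↔ ∃ m, 1 ≤ m ∧ m < n ∧ s.Holds w n m := by
  simp only [pastThere, Holds, PTL.Sat, PTL.sat_top, true_and]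
  constructor
  · rintro ⟨⟨hhere, m, hm₁, hm₂, hthere⟩, hend⟩
    exact ⟨m, hm₁, hm₂, hhere, hthere, hend⟩
  · rintro ⟨m, hm₁, hm₂, hhere, hthere, hend⟩
    exact ⟨⟨hhere, m, hm₁, hm₂, hthere⟩, hend⟩

lemma holds_onceThere :
    (s.onceThere a).Holds w n n' ↔ ∃ m, 1 ≤ m ∧ m ≤ w.length ∧ s.Holds w n m := by
  simp only [onceThere, Holds, PTL.Models, PTL.Sat, PTL.sat_top, true_and, Nat.lt_succ_iff]
  constructor
  · rintro ⟨hhere, ⟨m, hm₁, hm₂, hthere⟩, hend⟩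
    exact ⟨m, hm₁, hm₂, hhere, hthere, hend⟩
  · rintro ⟨m, hm₁, hm₂, hhere, hthere, hend⟩
    exact ⟨hhere, ⟨m, hm₁, hm₂, hthere⟩, hend⟩

lemma exists_negations_holds : (∃ r ∈ s.negations a, r.Holds w n n') ↔ ¬ s.Holds w n n' := by
  simp only [negations, Holds, PTL.Models, List.mem_cons, List.not_mem_nil, or_false,
    exists_eq_or_imp, exists_eq_left, PTL.Sat, PTL.sat_top]
  tauto

lemma models_toPTL : PTL.Models w s.toPTL ↔ s.Holds w (w.length + 1) (w.length + 1) := by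
  simp only [toPTL, Holds, PTL.Models, PTL.Sat]

def prod (l₁ l₂ : List (Separated α)) : List (Separated α) :=
  l₁.flatMap fun s => l₂.map s.and

lemma exists_prod_holds (l₁ l₂ : List (Separated α)) :
    (∃ r ∈ prod l₁ l₂, r.Holds w n n') ↔
      (∃ s ∈ l₁, s.Holds w n n') ∧ ∃ t ∈ l₂, t.Holds w n n' := by
  simp only [prod, List.mem_flatMap, List.mem_map]
  constructor
  · rintro ⟨_, ⟨s, hs, t, ht, rfl⟩, h⟩
    exact ⟨⟨s, hs, ((holds_and ..).mp h).1⟩, ⟨t, ht, ((holds_and ..).mp h).2⟩⟩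
  · rintro ⟨⟨s, hs, hs'⟩, ⟨t, ht, ht'⟩⟩
    exact ⟨_, ⟨s, hs, t, ht, rfl⟩, (holds_and ..).mpr ⟨hs', ht'⟩⟩

def compl : List (Separated α) → List (Separated α)
  | [] => [⟨PTL.top a, PTL.top a, PTL.top a⟩]
  | s :: l => prod (s.negations a) (compl l)

lemma exists_compl_holds (l : List (Separated α)) :
    (∃ r ∈ compl a l, r.Holds w n n') ↔ ∀ s ∈ l, ¬ s.Holds w n n' := by
  induction l with
  | nil => simp [compl, Holds, PTL.Models]
  | cons s l ih => simp only [compl, exists_prod_holds, exists_negations_holds, ih,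
      List.forall_mem_cons]

def Expresses (l : List (Separated α)) (v : PVar) (P : List α → (PVar → ℕ) → Prop) : Prop :=
  ∀ w ρ, P w ρ ↔ ∃ s ∈ l, s.Holds w (ρ v) (ρ v.other)

variable {P : List α → (PVar → ℕ) → Prop} {l : List (Separated α)} {u : PVar}

lemma Expresses.map_swap (h : Expresses l u P) : Expresses (l.map swap) u.other P := by
  intro w ρ
  simp only [h w ρ, List.mem_map, exists_exists_and_eq_and, holds_swap, PVar.other_other]

lemma Expresses.exists_expresses (h : Expresses l u P) (v : PVar) :
    ∃ l', Expresses l' v P := by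
  rcases u.eq_or_eq_other v with rfl | rfl
  exacts [⟨l, h⟩, ⟨_, h.map_swap⟩]

end Separated

open Separated

namespace PFO

lemma sat_congr (w : List α) (φ : PFO α) {ρ ρ' : PVar → ℕ}
    (h : ∀ v ∈ φ.freeVars, ρ v = ρ' v) : PFO.Sat w φ ρ ↔ PFO.Sat w φ ρ' := by
  have update_agree : ∀ {s : Finset PVar} {ρ ρ' : PVar → ℕ} (v : PVar) (m : ℕ),
      (∀ u ∈ s.erase v, ρ u = ρ' u) →
        ∀ u ∈ s, Function.update ρ v m u = Function.update ρ' v m u := by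
    intro s ρ ρ' v m h u hu
    rcases eq_or_ne u v with rfl | hne
    · simp
    · simp only [Function.update_of_ne hne]
      exact h u (Finset.mem_erase.mpr ⟨hne, hu⟩)
  induction φ generalizing ρ ρ' with
  | atom a v => simp only [PFO.Sat, h v (by simp [freeVars])]
  | conj φ₁ φ₂ ih₁ ih₂ =>
    simp only [freeVars, Finset.mem_union] at h
    exact and_congr (ih₁ fun v hv => h v (.inl hv)) (ih₂ fun v hv => h v (.inr hv))
  | neg φ ih => exact not_congr (ih h)
  | existsLt v φ ih =>
    simp only [freeVars, Finset.mem_union, Finset.mem_singleton] at h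
    simp only [PFO.Sat, h v.other (.inr rfl)]
    refine exists_congr fun m => and_congr_right fun _ => and_congr_right fun _ =>
      ih (update_agree v m fun u hu => h u (.inl hu))
  | existsUnb v φ ih =>
    simp only [freeVars] at h
    simp only [PFO.Sat]
    exact exists_congr fun m => and_congr_right fun _ => and_congr_right fun _ =>
      ih (update_agree v m h)

lemma expresses_existsLt (a : α) {φ : PFO α} {u : PVar} {l : List (Separated α)}
    (h : Expresses l u.other (PFO.Sat · φ)) :
    Expresses (l.map (pastThere a)) u.other (PFO.Sat · (.existsLt u φ)) := by
  intro w ρ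
  simp only [PFO.Sat, h w, PVar.update_apply_other, PVar.other_other, Function.update_self,
    List.mem_map, exists_exists_and_eq_and, holds_pastThere]
  exact ⟨fun ⟨m, hm₁, hm₂, s, hs, hsm⟩ => ⟨s, hs, m, hm₁, hm₂, hsm⟩,
    fun ⟨s, hs, m, hm₁, hm₂, hsm⟩ => ⟨m, hm₁, hm₂, s, hs, hsm⟩⟩

lemma expresses_existsUnb (a : α) {φ : PFO α} {u : PVar} {l : List (Separated α)}
    (h : Expresses l u.other (PFO.Sat · φ)) :
    Expresses (l.map (onceThere a)) u.other (PFO.Sat · (.existsUnb u φ)) := by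
  intro w ρ
  simp only [PFO.Sat, h w, PVar.update_apply_other, PVar.other_other, Function.update_self,
    List.mem_map, exists_exists_and_eq_and, holds_onceThere]
  exact ⟨fun ⟨m, hm₁, hm₂, s, hs, hsm⟩ => ⟨s, hs, m, hm₁, hm₂, hsm⟩,
    fun ⟨s, hs, m, hm₁, hm₂, hsm⟩ => ⟨m, hm₁, hm₂, s, hs, hsm⟩⟩

theorem exists_separated (a : α) (φ : PFO α) (v : PVar) :
    ∃ l : List (Separated α), Expresses l v (PFO.Sat · φ) := by
  induction φ generalizing v with
  | atom b u =>
    rcases u.eq_or_eq_other v with rfl | rfl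
    · exact ⟨[⟨.atom b, PTL.top a, PTL.top a⟩], fun w ρ => by simp [PFO.Sat, Holds, PTL.Sat, PTL.Models]⟩
    · exact ⟨[⟨PTL.top a, .atom b, PTL.top a⟩], fun w ρ => by simp [PFO.Sat, Holds, PTL.Sat, PTL.Models]⟩
  | conj φ₁ φ₂ ih₁ ih₂ =>
    obtain ⟨l₁, h₁⟩ := ih₁ v
    obtain ⟨l₂, h₂⟩ := ih₂ v
    exact ⟨prod l₁ l₂, fun w ρ => by rw [exists_prod_holds, ← h₁, ← h₂]; rfl⟩
  | neg φ ih =>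
    obtain ⟨l, h⟩ := ih v
    refine ⟨compl a l, fun w ρ => ?_⟩
    rw [exists_compl_holds]
    exact (h w ρ).not.trans (by simp only [not_exists, not_and])
  | existsLt u φ ih =>
    obtain ⟨l, h⟩ := ih u.other
    exact (expresses_existsLt a h).exists_expresses v
  | existsUnb u φ ih =>
    obtain ⟨l, h⟩ := ih u.other
    exact (expresses_existsUnb a h).exists_expresses v

def someLetter : PFO α → α
  | .atom a _ => a
  | .conj φ _ => φ.someLetter
  | .neg φ => φ.someLetter
  | .existsLt _ φ => φ.someLetter
  | .existsUnb _ φ => φ.someLetter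

theorem exists_ptl_of_freeVars_eq_empty (φ : PFO α) (hφ : φ.freeVars = ∅) :
    ∃ ψ : PTL α, ∀ w, (∀ ρ, PFO.Sat w φ ρ) ↔ PTL.Models w ψ := by
  obtain ⟨l, hl⟩ := exists_separated φ.someLetter φ .x
  refine ⟨PTL.bigOr φ.someLetter (l.map toPTL), fun w => ?_⟩
  have sat_iff_sat_atEnd : ∀ ρ, PFO.Sat w φ ρ ↔ PFO.Sat w φ fun _ => w.length + 1 :=
    fun ρ => sat_congr w φ (by simp [hφ])
  rw [PTL.Models, PTL.sat_bigOr, forall_congr' sat_iff_sat_atEnd, forall_const]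
  simp only [hl w, List.mem_map, exists_exists_and_eq_and]
  exact exists_congr fun s => and_congr_right fun _ => (models_toPTL s w).symm

end PFO

namespace PTL

def toPFO : PTL α → PVar → PFO α
  | .atom a, v => .atom a v
  | .conj ψ₁ ψ₂, v => .conj (toPFO ψ₁ v) (toPFO ψ₂ v)
  | .neg ψ, v => .neg (toPFO ψ v)
  | .past ψ, v => .existsLt v.other (toPFO ψ v.other)

lemma freeVars_toPFO (ψ : PTL α) (v : PVar) : (ψ.toPFO v).freeVars ⊆ {v} := by
  induction ψ generalizing v with
  | atom a => simp [toPFO, PFO.freeVars]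
  | conj ψ₁ ψ₂ ih₁ ih₂ => exact Finset.union_subset (ih₁ v) (ih₂ v)
  | neg ψ ih => exact ih v
  | past ψ ih =>
    simp only [toPFO, PFO.freeVars, PVar.other_other]
    rw [(Finset.erase_eq_empty_iff _ _).mpr (Finset.subset_singleton_iff.mp (ih v.other)),
      Finset.empty_union]

lemma sat_toPFO (w : List α) (ψ : PTL α) (v : PVar) (ρ : PVar → ℕ) :
    PFO.Sat w (ψ.toPFO v) ρ ↔ PTL.Sat w ψ (ρ v) := by
  induction ψ generalizing v ρ with
  | atom a => rfl
  | conj ψ₁ ψ₂ ih₁ ih₂ => exact and_congr (ih₁ v ρ) (ih₂ v ρ)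
  | neg ψ ih => exact not_congr (ih v ρ)
  | past ψ ih =>
    simp only [toPFO, PFO.Sat, PTL.Sat, PVar.other_other, ih, Function.update_self]

def toSentence : PTL α → PFO α
  -- no letter stands at the end position
  | .atom a => .existsUnb .x (.conj (.atom a .x) (.neg (.atom a .x)))
  | .conj ψ₁ ψ₂ => .conj (toSentence ψ₁) (toSentence ψ₂)
  | .neg ψ => .neg (toSentence ψ)
  | .past ψ => .existsUnb .x (ψ.toPFO .x)

lemma freeVars_toSentence (ψ : PTL α) : ψ.toSentence.freeVars = ∅ := by
  induction ψ with
  | atom a => simp [toSentence, PFO.freeVars]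
  | conj ψ₁ ψ₂ ih₁ ih₂ => simp [toSentence, PFO.freeVars, ih₁, ih₂]
  | neg ψ ih => exact ih
  | past ψ =>
    exact (Finset.erase_eq_empty_iff _ _).mpr (Finset.subset_singleton_iff.mp (freeVars_toPFO ψ .x))

lemma sat_toSentence (w : List α) (ψ : PTL α) (ρ : PVar → ℕ) :
    PFO.Sat w ψ.toSentence ρ ↔ PTL.Models w ψ := by
  induction ψ with
  | atom a => simp [toSentence, PFO.Sat, PTL.Models, PTL.Sat]
  | conj ψ₁ ψ₂ ih₁ ih₂ => exact and_congr ih₁ ih₂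
  | neg ψ ih => exact not_congr ih
  | past ψ =>
    simp only [toSentence, PFO.Sat, PTL.Models, PTL.Sat, sat_toPFO, Function.update_self,
      Nat.lt_succ_iff]

end PTL

end

theorem pfo_iff_ptl_definable_general {α : Type*} (L : Set (List α)) :
    PFODefinable L ↔ PTLDefinable L := by
  constructor
  · rintro ⟨φ, hφ, hL⟩
    obtain ⟨ψ, hψ⟩ := φ.exists_ptl_of_freeVars_eq_empty hφ
    exact ⟨ψ, fun w => (hL w).trans (hψ w)⟩
  · rintro ⟨ψ, hL⟩
    refine ⟨ψ.toSentence, ψ.freeVars_toSentence, fun w => ?_⟩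
    simp only [hL w, PTL.sat_toSentence, forall_const]

/-- PFO and PTL have the same expressive power: a language is definable by
a PFO sentence iff it is PTL-definable. -/
theorem pfo_iff_ptl_definable {α : Type*} [Fintype α] (L : Set (List α)) :
    PFODefinable L ↔ PTLDefinable L :=
  pfo_iff_ptl_definable_general L
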